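/- Semantic consequence of projectivity: if a substitution σ on truth functions ℕ → Prop satisfies that in every model where □⁻φ holds everywhere, each variable x is everywhere equivalent to σ(x), and σ(φ) is valid in all models, then for any other unifier σ' of φ there exists a substitution δ (namely σ') with σ'(x) everywhere-equivalent to δ(σ(x)) in all models. -/
import Mathlib


inductive TFml : Type
  | var : ℕ → TFml
  | bot : TFml
  | imp : TFml → TFml → TFml
  | since : TFml → TFml → TFml

namespace TFml

def neg (φ : TFml) : TFml := imp φ bot
def top : TFml := neg bot

/-- □⁻φ := ¬(⊤ S ¬φ). -/
def pastBox (φ : TFml) : TFml := neg (since top (neg φ))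

def Sat (V : ℕ → ℕ → Prop) : ℕ → TFml → Prop
  | a, var n => V n a
  | _, bot => False
  | a, imp φ ψ => Sat V a φ → Sat V a ψ
  | a, since φ ψ => ∃ b ≤ a, Sat V b ψ ∧ ∀ c, b < c → c ≤ a → Sat V c φ

def Valid (φ : TFml) : Prop := ∀ V a, Sat V a φ

def subst (σ : ℕ → TFml) : TFml → TFml
  | var n => σ n
  | bot => bot
  | imp φ ψ => imp (subst σ φ) (subst σ ψ)
  | since φ ψ => since (subst σ φ) (subst σ ψ)

end TFml

open TFml

/-- Semantic projectivity: if in every model where □⁻φ holds everywhere each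
variable x is everywhere equivalent to σ(x), and σ(φ) is valid, then for any
other unifier σ' of φ there is a substitution δ (namely σ') with σ'(x)
everywhere equivalent to δ(σ(x)) in all models. -/
theorem stmt10 (φ : TFml) (σ : ℕ → TFml)
    (hProj : ∀ V : ℕ → ℕ → Prop, (∀ a, Sat V a (pastBox φ)) →
      ∀ x a, Sat V a (TFml.var x) ↔ Sat V a (σ x))
    (hUnif : Valid (subst σ φ)) :
    ∀ σ' : ℕ → TFml, Valid (subst σ' φ) →
      ∃ δ : ℕ → TFml, ∀ x (V : ℕ → ℕ → Prop) (a : ℕ),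
        Sat V a (σ' x) ↔ Sat V a (subst δ (σ x)) := by
  have key : ∀ (τ : ℕ → TFml) (ψ : TFml) (V : ℕ → ℕ → Prop) (a : ℕ),
      Sat V a (subst τ ψ) ↔ Sat (fun n b => Sat V b (τ n)) a ψ := by
    intro τ ψ
    induction ψ with
    | var n => intro V a; rfl
    | bot => intro V a; rfl
    | imp α β ihα ihβ => intro V a; simp [Sat, subst, ihα, ihβ]
    | since α β ihα ihβ =>
      intro V a
      simp only [Sat, subst]
      constructor
      · rintro ⟨b, hb, h1, h2⟩
        exact ⟨b, hb, (ihβ V b).mp h1, fun c hc1 hc2 => (ihα V c).mp (h2 c hc1 hc2)⟩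
      · rintro ⟨b, hb, h1, h2⟩
        exact ⟨b, hb, (ihβ V b).mpr h1, fun c hc1 hc2 => (ihα V c).mpr (h2 c hc1 hc2)⟩
  intro σ' hσ'
  refine ⟨σ', fun x V a => ?_⟩
  set W : ℕ → ℕ → Prop := fun n b => Sat V b (σ' n) with hW
  have hWφ : ∀ a, Sat W a φ := fun a => (key σ' φ V a).mp (hσ' V a)
  have hbox : ∀ a, Sat W a (pastBox φ) := by
    intro a
    simp only [pastBox, neg, Sat]
    rintro ⟨b, hb, h1, -⟩
    exact h1 (hWφ b)
  have := hProj W hbox x a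
  simpa [Sat, W, key σ' (σ x) V a] using this
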